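/- Fix an integer 𝓀 ≥ 2, r > 0, λ > 0, reals α_1, …, α_𝓀, and positive reals p_1, …, p_𝓀 with Σ_i p_i = 1. For each i let (a_{ε,i})_{ε>0} be continuous functions on [0,r] with sup_{ε>0} ∫_0^r |a_{ε,i}| < ∞ and lim_{ε→0} ∫_y^z a_{ε,i} = α_i·[y = 0] for 0 ≤ y < z ≤ r. Let k_{ε,i} and ℓ_{ε,i} be the unique solutions on [0,r] of (1/2)u'' + a_{ε,i} u' = λu with k_{ε,i}(0)=0, k_{ε,i}'(0)=1 and ℓ_{ε,i}(r)=1, ℓ_{ε,i}'(r)=0; set w_{ε,i} := k_{ε,i}'ℓ_{ε,i} − ℓ_{ε,i}'k_{ε,i}, (R⁰_{λ,ε}g)_i(x) := 2k_{ε,i}(x)∫_x^r ℓ_{ε,i}g_i/w_{ε,i} + 2ℓ_{ε,i}(x)∫_0^x k_{ε,i}g_i/w_{ε,i}, C_{ε,i}(g) := 2∫_0^r ℓ_{ε,i}g_i/w_{ε,i}, 𝓛_{λ,ε} := 1 − λR⁰_{λ,ε}1, and R_{λ,ε}g := R⁰_{λ,ε}g + (Σ_i p_i C_{ε,i}(g))/(λ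 Σ_i p_i C_{ε,i}(1)) · 𝓛_{λ,ε}. Then for every g = (g_i)_i with each g_i ∈ C[0,r] and g_i(0) independent of i, as ε → 0+ each coordinate of R_{λ,ε}g converges uniformly on [0,r] to the corresponding coordinate of R_λ g := R⁰_λ g + (Σ_i p̃_i C_i(g))/(λ Σ_i p̃_i C_i(1)) · 𝓛_λ, where p̃_i := p_i e^{2α_i}/Σ_j p_j e^{2α_j}, (R⁰_λ g)_i(x) := 2k(x)∫_x^r ℓ g_i/w + 2ℓ(x)∫_0^x k g_i/w with k(x) = sinh(√(2λ)x)/√(2λ), ℓ(x) = cosh(√(2λ)(r−x)), w ≡ cosh(√(2λ)r), C_i(g) := (2/cosh(√(2λ)r))∫_0^r cosh(√(2λ)(r−y))g_i(y) dy, and 𝓛_λ := 1 − λR⁰_λ1. -/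

import Mathlib

open MeasureTheory Set Filter Topology Real

/-- `SolPK r lam a k` : `k` is a twice continuously differentiable solution on `[0,r]` of
`(1/2)k'' + a k' = λk` with `k(0) = 0`, `k'(0) = 1`. -/
def SolPK (r lam : ℝ) (a k : ℝ → ℝ) : Prop :=
  ContDiffOn ℝ 2 k (Icc 0 r) ∧
  (∀ x ∈ Icc 0 r,
    (1/2) * derivWithin (derivWithin k (Icc 0 r)) (Icc 0 r) x
      + a x * derivWithin k (Icc 0 r) x = lam * k x) ∧
  k 0 = 0 ∧ derivWithin k (Icc 0 r) 0 = 1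

/-- `SolPL r lam a ℓ` : `ℓ` is a twice continuously differentiable solution on `[0,r]` of
`(1/2)ℓ'' + a ℓ' = λℓ` with `ℓ(r) = 1`, `ℓ'(r) = 0`. -/
def SolPL (r lam : ℝ) (a l : ℝ → ℝ) : Prop :=
  ContDiffOn ℝ 2 l (Icc 0 r) ∧
  (∀ x ∈ Icc 0 r,
    (1/2) * derivWithin (derivWithin l (Icc 0 r)) (Icc 0 r) x
      + a x * derivWithin l (Icc 0 r) x = lam * l x) ∧
  l r = 1 ∧ derivWithin l (Icc 0 r) r = 0

/-- Wronskian `w = k'ℓ − ℓ'k` on `[0,r]`. -/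
noncomputable def wfn (r : ℝ) (k l : ℝ → ℝ) (y : ℝ) : ℝ :=
  derivWithin k (Icc 0 r) y * l y - derivWithin l (Icc 0 r) y * k y

/-- `(R⁰g)(x) = 2k(x)∫_x^r ℓg/w + 2ℓ(x)∫_0^x kg/w`. -/
noncomputable def R0 (r : ℝ) (k l g : ℝ → ℝ) (x : ℝ) : ℝ :=
  2 * k x * (∫ y in x..r, l y * g y / wfn r k l y)
    + 2 * l x * ∫ y in (0:ℝ)..x, k y * g y / wfn r k l y

/-- `C(g) = 2∫_0^r ℓg/w`. -/
noncomputable def Cfn (r : ℝ) (k l g : ℝ → ℝ) : ℝ :=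
  2 * ∫ y in (0:ℝ)..r, l y * g y / wfn r k l y

/-- The exit law `𝓛 = 1 − λR⁰1`. -/
noncomputable def Lfn (r lam : ℝ) (k l : ℝ → ℝ) (x : ℝ) : ℝ :=
  1 - lam * R0 r k l (fun _ => 1) x

/-- The resolvent of the approximating process on the star graph:
`Rg = R⁰g + (Σᵢ pᵢCᵢ(g))/(λΣᵢ pᵢCᵢ(1))·𝓛`. -/
noncomputable def Rfull (κ : ℕ) (r lam : ℝ) (p : Fin κ → ℝ)
    (k l : Fin κ → ℝ → ℝ) (g : Fin κ → ℝ → ℝ) (i : Fin κ) (x : ℝ) : ℝ :=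
  R0 r (k i) (l i) (g i) x
    + ((∑ j, p j * Cfn r (k j) (l j) (g j)) /
        (lam * ∑ j, p j * Cfn r (k j) (l j) (fun _ => 1)))
      * Lfn r lam (k i) (l i) x

/-- The limit minimal resolvent, built from `k(x) = sinh(√(2λ)x)/√(2λ)`,
`ℓ(x) = cosh(√(2λ)(r−x))` and the constant Wronskian `w = cosh(√(2λ)r)`. -/
noncomputable def R0lim (r lam : ℝ) (g : ℝ → ℝ) (x : ℝ) : ℝ :=
  2 * (Real.sinh (Real.sqrt (2 * lam) * x) / Real.sqrt (2 * lam)) *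
      (∫ y in x..r,
        Real.cosh (Real.sqrt (2 * lam) * (r - y)) * g y / Real.cosh (Real.sqrt (2 * lam) * r))
    + 2 * Real.cosh (Real.sqrt (2 * lam) * (r - x)) *
      ∫ y in (0:ℝ)..x,
        (Real.sinh (Real.sqrt (2 * lam) * y) / Real.sqrt (2 * lam)) * g y /
          Real.cosh (Real.sqrt (2 * lam) * r)

/-- `C_i(g) = (2/cosh(√(2λ)r))∫_0^r cosh(√(2λ)(r−y))g(y)dy`. -/
noncomputable def Clim (r lam : ℝ) (g : ℝ → ℝ) : ℝ :=
  2 / Real.cosh (Real.sqrt (2 * lam) * r) *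
    ∫ y in (0:ℝ)..r, Real.cosh (Real.sqrt (2 * lam) * (r - y)) * g y

/-- `𝓛_λ = 1 − λR⁰_λ1`. -/
noncomputable def Llim (r lam : ℝ) (x : ℝ) : ℝ := 1 - lam * R0lim r lam (fun _ => 1) x

/-- The resolvent of the limit Walsh process with weights `p̃`. -/
noncomputable def Rlimf (κ : ℕ) (r lam : ℝ) (pt : Fin κ → ℝ)
    (g : Fin κ → ℝ → ℝ) (i : Fin κ) (x : ℝ) : ℝ :=
  R0lim r lam (g i) x
    + ((∑ j, pt j * Clim r lam (g j)) / (lam * ∑ j, pt j * Clim r lam (fun _ => 1)))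
      * Llim r lam x


/-!
Write `A_ε = ∫₀ʸ a_ε` for the potential of the drift. For a solution `u` of
`½ u'' + a_ε u' = λ u`, the pair `(u, v)` with `v = e^{2A_ε} u'` solves the linear Volterra system
`u' = e^{-2A_ε} v`, `v' = 2λ e^{2A_ε} u`, and the Wronskian is `w_ε = ℓ_ε(0) e^{-2A_ε}`. The
hypotheses say that `A_ε` stays bounded and tends to `α` on `(0, r]`, so the coefficients converge
boundedly almost everywhere; by Grönwall's inequality `k_ε → e^{-2α} sinh(√(2λ)x)/√(2λ)` and
`ℓ_ε → cosh(√(2λ)(r - x))` uniformly, and dominated convergence passes to the limit in the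
integrals defining `R⁰_{λ,ε}` and `C_{ε,i}`. In `R⁰` the factors `e^{∓2α_i}` cancel, while
`C_{ε,i}(g) → e^{2α_i} C_i(g)`: this surviving factor turns `p_i` into `p̃_i`.
-/

section UniformConvergence

variable {ι α : Type*} {l : Filter ι} {s : Set α} {F G : ι → α → ℝ} {f g : α → ℝ}

theorem tendstoUniformlyOn_of_abs_sub_le {δ : ι → ℝ} (hδ : Tendsto δ l (𝓝 0))
    (h : ∀ᶠ i in l, ∀ x ∈ s, |F i x - f x| ≤ δ i) : TendstoUniformlyOn F f l s := by
  refine Metric.tendstoUniformlyOn_iff.2 fun η hη => ?_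
  filter_upwards [h, hδ.eventually (gt_mem_nhds hη)] with i hi hδi x hx
  rw [dist_comm, Real.dist_eq]
  exact (hi x hx).trans_lt hδi

theorem TendstoUniformlyOn.eventually_abs_le {B : ℝ} (hF : TendstoUniformlyOn F f l s)
    (hf : ∀ x ∈ s, |f x| ≤ B) : ∀ᶠ i in l, ∀ x ∈ s, |F i x| ≤ B + 1 := by
  filter_upwards [Metric.tendstoUniformlyOn_iff.1 hF 1 one_pos] with i hi x hx
  have := hi x hx
  rw [Real.dist_eq] at this
  linarith [abs_sub_abs_le_abs_sub (F i x) (f x), abs_sub_comm (f x) (F i x), hf x hx]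

theorem TendstoUniformlyOn.mul_of_isCompact [TopologicalSpace α] (hs : IsCompact s)
    (hF : TendstoUniformlyOn F f l s) (hG : TendstoUniformlyOn G g l s) (hf : ContinuousOn f s) (hg : ContinuousOn g s) :
    TendstoUniformlyOn (fun i x => F i x * G i x) (fun x => f x * g x) l s := by
  obtain ⟨Bf, hBf⟩ := hs.exists_bound_of_continuousOn hf
  obtain ⟨Bg, hBg⟩ := hs.exists_bound_of_continuousOn hg
  refine Metric.tendstoUniformlyOn_iff.2 fun η hη => ?_
  set B := |Bf| + |Bg| + 1
  have hB : 0 < B := by positivity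
  have hδ : 0 < η / (3 * B) := by positivity
  filter_upwards [hF.eventually_abs_le hBf, Metric.tendstoUniformlyOn_iff.1 hF _ hδ,
    Metric.tendstoUniformlyOn_iff.1 hG _ hδ] with i hFB hFf hGg x hx
  have hF1 := hFB x hx
  have hf1 := hBf x hx
  have hg1 := hBg x hx
  rw [Real.norm_eq_abs] at hf1 hg1
  have hFf1 := hFf x hx
  have hGg1 := hGg x hx
  rw [Real.dist_eq] at hFf1 hGg1 ⊢
  calc |f x * g x - F i x * G i x| = |(f x - F i x) * g x + F i x * (g x - G i x)| := by
        ring_nf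
    _ ≤ |f x - F i x| * |g x| + |F i x| * |g x - G i x| := by
        rw [← abs_mul, ← abs_mul]; exact abs_add_le _ _
    _ ≤ η / (3 * B) * B + B * (η / (3 * B)) := by
        gcongr
        · linarith [le_abs_self Bg, abs_nonneg Bf]
        · linarith [le_abs_self Bf, abs_nonneg Bg]
    _ = 2 * η / 3 := by field_simp; ring
    _ < η := by linarith

end UniformConvergence

theorem hasDerivWithinAt_primitive_Icc {a b x : ℝ} {h : ℝ → ℝ} (hh : ContinuousOn h (Icc a b))
    (hx : x ∈ Icc a b) :
    HasDerivWithinAt (fun y => ∫ t in a..y, h t) (h x) (Icc a b) x := by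
  have : Fact (x ∈ Icc a b) := ⟨hx⟩
  refine intervalIntegral.integral_hasDerivWithinAt_right ?_
    (hh.stronglyMeasurableAtFilter_nhdsWithin measurableSet_Icc x) (hh x hx)
  refine (hh.mono ?_).intervalIntegrable
  rw [uIcc_of_le hx.1]
  exact Icc_subset_Icc le_rfl hx.2

theorem continuousOn_primitives_Icc {a b : ℝ} (hab : a ≤ b) {h : ℝ → ℝ}
    (hh : ContinuousOn h (Icc a b)) :
    ContinuousOn (fun x => ∫ t in a..x, h t) (Icc a b) ∧
      ContinuousOn (fun x => ∫ t in x..b, h t) (Icc a b) := by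
  have hint : IntegrableOn h (uIcc a b) := by rw [uIcc_of_le hab]; exact hh.integrableOn_Icc
  have h1 := intervalIntegral.continuousOn_primitive_interval hint
  have h2 := intervalIntegral.continuousOn_primitive_interval_left hint
  rw [uIcc_of_le hab] at h1 h2
  exact ⟨h1, h2⟩

theorem integral_eq_sub_of_hasDerivWithinAt_Icc {a b x y : ℝ} {f f' : ℝ → ℝ}
    (hf : ∀ t ∈ Icc a b, HasDerivWithinAt f (f' t) (Icc a b) t) (hf' : ContinuousOn f' (Icc a b))
    (hx : a ≤ x) (hxy : x ≤ y) (hy : y ≤ b) :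
    ∫ t in x..y, f' t = f y - f x := by
  have hsub : Icc x y ⊆ Icc a b := Icc_subset_Icc hx hy
  refine intervalIntegral.integral_eq_sub_of_hasDeriv_right_of_le hxy
    (fun t ht => (hf t (hsub ht)).continuousWithinAt.mono hsub) (fun t ht => ?_)
    ((hf'.mono hsub).intervalIntegrable_of_Icc hxy)
  exact (hf t (hsub (Ioo_subset_Icc_self ht))).mono_of_mem_nhdsWithin
    (Icc_mem_nhdsGT_of_mem ⟨hx.trans ht.1.le, ht.2.trans_le hy⟩)

theorem le_mul_exp_of_le_add_mul_integral {T C δ : ℝ} {f : ℝ → ℝ} (hC : 0 ≤ C)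
    (hf : ContinuousOn f (Icc 0 T)) (hf0 : ∀ x ∈ Icc 0 T, 0 ≤ f x)
    (h : ∀ x ∈ Icc 0 T, f x ≤ δ + C * ∫ y in (0:ℝ)..x, f y) :
    ∀ x ∈ Icc 0 T, f x ≤ δ * exp (C * x) := by
  set E : ℝ → ℝ := fun x => ∫ y in (0:ℝ)..x, f y
  have hE : ∀ x ∈ Icc 0 T, HasDerivWithinAt E (f x) (Icc 0 T) x :=
    fun x hx => hasDerivWithinAt_primitive_Icc hf hx
  have hE0 : ∀ x ∈ Icc 0 T, 0 ≤ E x := fun x hx =>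
    intervalIntegral.integral_nonneg hx.1 fun y hy => hf0 y ⟨hy.1, hy.2.trans hx.2⟩
  have hgron := norm_le_gronwallBound_of_norm_deriv_right_le (δ := 0) (K := C) (ε := δ)
    (fun x hx => (hE x hx).continuousWithinAt)
    (fun x hx => (hE x (Ico_subset_Icc_self hx)).mono_of_mem_nhdsWithin
      (Icc_mem_nhdsGE_of_mem hx))
    (by simp [E]) (fun x hx => by
      have hx' := Ico_subset_Icc_self hx
      rw [Real.norm_eq_abs, Real.norm_eq_abs, abs_of_nonneg (hf0 x hx'),
        abs_of_nonneg (hE0 x hx')]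
      linarith [h x hx'])
  intro x hx
  have hEx := hgron x hx
  rw [Real.norm_eq_abs, abs_of_nonneg (hE0 x hx), sub_zero] at hEx
  calc f x ≤ δ + C * gronwallBound 0 C δ x := by
        linarith [h x hx, mul_le_mul_of_nonneg_left hEx hC]
    _ = δ * exp (C * x) := by
        rcases hC.eq_or_lt with rfl | hC
        · simp
        · rw [gronwallBound_of_K_ne_0 hC.ne']
          field_simp
          ring

section DominatedPrimitives

variable {ι : Type*} {l : Filter ι} {a b : ℝ} {H : ι → ℝ → ℝ} {H' : ℝ → ℝ}

theorem tendsto_setIntegral_abs_sub_of_dominated [l.IsCountablyGenerated] {B : ℝ}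
    (hH : ∀ᶠ i in l, ContinuousOn (H i) (Icc a b)) (hB : ∀ᶠ i in l, ∀ y ∈ Icc a b, |H i y| ≤ B)
    (hH' : ContinuousOn H' (Icc a b))
    (hlim : ∀ y ∈ Ioo a b, Tendsto (fun i => H i y) l (𝓝 (H' y))) :
    Tendsto (fun i => ∫ y in Ioc a b, |H i y - H' y|) l (𝓝 0) := by
  have hae : ∀ᵐ y ∂volume.restrict (Ioc a b), y ∈ Ioo a b := by
    rw [← restrict_Ioo_eq_restrict_Ioc]
    exact ae_restrict_mem measurableSet_Ioo
  have h := tendsto_integral_filter_of_dominated_convergence (fun y => B + |H' y|)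
    (hH.mono fun i hi => (((hi.sub hH').abs).mono Ioc_subset_Icc_self).aestronglyMeasurable
      measurableSet_Ioc)
    (hB.mono fun i hi => (ae_restrict_mem measurableSet_Ioc).mono fun y hy => by
      rw [Real.norm_eq_abs, abs_abs, Pi.sub_apply]
      linarith [abs_sub (H i y) (H' y), hi y (Ioc_subset_Icc_self hy)])
    ((continuousOn_const.add hH'.abs).integrableOn_Icc.mono_set Ioc_subset_Icc_self)
    (hae.mono fun y hy => by
      simpa using ((hlim y hy).sub_const (H' y)).abs)
  rwa [integral_zero] at h

theorem abs_intervalIntegral_le_setIntegral_abs {x y : ℝ} {h : ℝ → ℝ}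
    (hh : IntegrableOn h (Ioc a b)) (hx : a ≤ x) (hxy : x ≤ y) (hy : y ≤ b) :
    |∫ t in x..y, h t| ≤ ∫ t in Ioc a b, |h t| := by
  refine (intervalIntegral.abs_integral_le_integral_abs hxy).trans ?_
  rw [intervalIntegral.integral_of_le hxy]
  exact setIntegral_mono_set hh.norm (Eventually.of_forall fun _ => abs_nonneg _)
    (Ioc_subset_Ioc hx hy).eventuallyLE

theorem tendstoUniformlyOn_primitives_of_tendsto_setIntegral_abs_sub
    (hH : ∀ᶠ i in l, ContinuousOn (H i) (Icc a b)) (hH' : ContinuousOn H' (Icc a b))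
    (hL1 : Tendsto (fun i => ∫ y in Ioc a b, |H i y - H' y|) l (𝓝 0)) :
    TendstoUniformlyOn (fun i x => ∫ y in a..x, H i y) (fun x => ∫ y in a..x, H' y) l (Icc a b) ∧
    TendstoUniformlyOn (fun i x => ∫ y in x..b, H i y) (fun x => ∫ y in x..b, H' y) l
      (Icc a b) := by
  have key : ∀ᶠ i in l, ∀ x y, a ≤ x → x ≤ y → y ≤ b →
      |(∫ t in x..y, H i t) - ∫ t in x..y, H' t| ≤ ∫ t in Ioc a b, |H i t - H' t| := by
    filter_upwards [hH] with i hi x y hx hxy hy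
    have hsub : uIcc x y ⊆ Icc a b := by rw [uIcc_of_le hxy]; exact Icc_subset_Icc hx hy
    rw [← intervalIntegral.integral_sub ((hi.mono hsub).intervalIntegrable)
      ((hH'.mono hsub).intervalIntegrable)]
    exact abs_intervalIntegral_le_setIntegral_abs
      ((hi.sub hH').integrableOn_Icc.mono_set Ioc_subset_Icc_self) hx hxy hy
  exact ⟨tendstoUniformlyOn_of_abs_sub_le hL1 (key.mono fun i hi x hx => hi _ _ le_rfl hx.1 hx.2),
    tendstoUniformlyOn_of_abs_sub_le hL1 (key.mono fun i hi x hx => hi _ _ hx.1 hx.2 le_rfl)⟩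

end DominatedPrimitives

section VolterraSystem

variable {r C : ℝ}

theorem abs_integral_mul_sub_integral_mul_le {p p' w w' : ℝ → ℝ} {x : ℝ} (hx : x ∈ Icc 0 r)
    (hp : ContinuousOn p (Icc 0 r)) (hp' : ContinuousOn p' (Icc 0 r))
    (hw : ContinuousOn w (Icc 0 r)) (hw' : ContinuousOn w' (Icc 0 r))
    (hpC : ∀ y ∈ Icc 0 r, |p y| ≤ C) :
    |(∫ y in (0:ℝ)..x, p y * w y) - ∫ y in (0:ℝ)..x, p' y * w' y|
      ≤ C * (∫ y in (0:ℝ)..x, |w y - w' y|) + ∫ y in Ioc 0 r, |p y * w' y - p' y * w' y| := by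
  have hsub : uIcc 0 x ⊆ Icc 0 r := by rw [uIcc_of_le hx.1]; exact Icc_subset_Icc le_rfl hx.2
  have hint : ∀ {f : ℝ → ℝ}, ContinuousOn f (Icc 0 r) → IntervalIntegrable f volume 0 x :=
    fun hf => (hf.mono hsub).intervalIntegrable
  have hsplit : (∫ y in (0:ℝ)..x, p y * w y) - ∫ y in (0:ℝ)..x, p' y * w' y
      = (∫ y in (0:ℝ)..x, p y * (w y - w' y)) + ∫ y in (0:ℝ)..x, (p y * w' y - p' y * w' y) := by
    rw [← intervalIntegral.integral_sub (hint (hp.fun_mul hw)) (hint (hp'.fun_mul hw')),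
      ← intervalIntegral.integral_add (hint (hp.fun_mul (hw.fun_sub hw')))
        (hint ((hp.fun_mul hw').fun_sub (hp'.fun_mul hw')))]
    congr 1 with y
    ring
  have hmain : |∫ y in (0:ℝ)..x, p y * (w y - w' y)| ≤ C * ∫ y in (0:ℝ)..x, |w y - w' y| := by
    rw [← intervalIntegral.integral_const_mul]
    refine (intervalIntegral.abs_integral_le_integral_abs hx.1).trans
      (intervalIntegral.integral_mono_on hx.1 (hint (hp.mul (hw.sub hw'))).abs
        (hint (continuousOn_const.mul (hw.sub hw').abs)) fun y hy => ?_)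
    rw [abs_mul]
    exact mul_le_mul_of_nonneg_right (hpC y (hsub (Icc_subset_uIcc hy))) (abs_nonneg _)
  rw [hsplit]
  exact (abs_add_le _ _).trans (add_le_add hmain (abs_intervalIntegral_le_setIntegral_abs
    (((hp.mul hw').sub (hp'.mul hw')).integrableOn_Icc.mono_set Ioc_subset_Icc_self)
    le_rfl hx.1 hx.2))

variable {u₀ v₀ : ℝ}

theorem abs_sub_add_abs_sub_le_of_volterra {p q u v p' q' u' v' : ℝ → ℝ}
    (hp : ContinuousOn p (Icc 0 r)) (hq : ContinuousOn q (Icc 0 r))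
    (hp' : ContinuousOn p' (Icc 0 r)) (hq' : ContinuousOn q' (Icc 0 r))
    (hu : ContinuousOn u (Icc 0 r)) (hv : ContinuousOn v (Icc 0 r))
    (hu' : ContinuousOn u' (Icc 0 r)) (hv' : ContinuousOn v' (Icc 0 r))
    (hpC : ∀ y ∈ Icc 0 r, |p y| ≤ C) (hqC : ∀ y ∈ Icc 0 r, |q y| ≤ C)
    (hu_eq : ∀ x ∈ Icc 0 r, u x = u₀ + ∫ y in (0:ℝ)..x, p y * v y)
    (hv_eq : ∀ x ∈ Icc 0 r, v x = v₀ + ∫ y in (0:ℝ)..x, q y * u y)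
    (hu'_eq : ∀ x ∈ Icc 0 r, u' x = u₀ + ∫ y in (0:ℝ)..x, p' y * v' y)
    (hv'_eq : ∀ x ∈ Icc 0 r, v' x = v₀ + ∫ y in (0:ℝ)..x, q' y * u' y) {x : ℝ}
    (hx : x ∈ Icc 0 r) :
    |u x - u' x| + |v x - v' x|
      ≤ ((∫ y in Ioc 0 r, |p y * v' y - p' y * v' y|)
          + ∫ y in Ioc 0 r, |q y * u' y - q' y * u' y|) * exp (C * r) := by
  set δ := (∫ y in Ioc 0 r, |p y * v' y - p' y * v' y|)
    + ∫ y in Ioc 0 r, |q y * u' y - q' y * u' y|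
  have hC : 0 ≤ C := (abs_nonneg _).trans (hpC x hx)
  have hδ : 0 ≤ δ := add_nonneg (setIntegral_nonneg measurableSet_Ioc fun _ _ => abs_nonneg _)
    (setIntegral_nonneg measurableSet_Ioc fun _ _ => abs_nonneg _)
  have hineq : ∀ y ∈ Icc 0 r, |u y - u' y| + |v y - v' y|
      ≤ δ + C * ∫ t in (0:ℝ)..y, (|u t - u' t| + |v t - v' t|) := by
    intro y hy
    have hsub : uIcc 0 y ⊆ Icc 0 r := by
      rw [uIcc_of_le hy.1]; exact Icc_subset_Icc le_rfl hy.2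
    have hu_le := abs_integral_mul_sub_integral_mul_le hy hp hp' hv hv' hpC
    have hv_le := abs_integral_mul_sub_integral_mul_le hy hq hq' hu hu' hqC
    rw [intervalIntegral.integral_add (((hu.fun_sub hu').abs.mono hsub).intervalIntegrable)
      (((hv.fun_sub hv').abs.mono hsub).intervalIntegrable)]
    rw [hu_eq y hy, hu'_eq y hy, add_sub_add_left_eq_sub]
    rw [hv_eq y hy, hv'_eq y hy, add_sub_add_left_eq_sub]
    linarith
  calc |u x - u' x| + |v x - v' x| ≤ δ * exp (C * x) :=
        le_mul_exp_of_le_add_mul_integral hC (((hu.sub hu').abs).add ((hv.sub hv').abs))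
          (fun y _ => add_nonneg (abs_nonneg _) (abs_nonneg _)) hineq x hx
    _ ≤ δ * exp (C * r) := by gcongr; exact hx.2

variable {ι : Type*} {l : Filter ι} {P Q u v : ι → ℝ → ℝ} {P' Q' u' v' : ℝ → ℝ}

theorem tendstoUniformlyOn_of_volterra_system [l.IsCountablyGenerated]
    (hP : ∀ᶠ i in l, ContinuousOn (P i) (Icc 0 r)) (hQ : ∀ᶠ i in l, ContinuousOn (Q i) (Icc 0 r))
    (hPC : ∀ᶠ i in l, ∀ y ∈ Icc 0 r, |P i y| ≤ C) (hQC : ∀ᶠ i in l, ∀ y ∈ Icc 0 r, |Q i y| ≤ C)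
    (hP' : ContinuousOn P' (Icc 0 r)) (hQ' : ContinuousOn Q' (Icc 0 r))
    (hPlim : ∀ y ∈ Ioo 0 r, Tendsto (fun i => P i y) l (𝓝 (P' y)))
    (hQlim : ∀ y ∈ Ioo 0 r, Tendsto (fun i => Q i y) l (𝓝 (Q' y)))
    (hu : ∀ᶠ i in l, ContinuousOn (u i) (Icc 0 r)) (hv : ∀ᶠ i in l, ContinuousOn (v i) (Icc 0 r))
    (hu' : ContinuousOn u' (Icc 0 r)) (hv' : ContinuousOn v' (Icc 0 r))
    (hu_eq : ∀ᶠ i in l, ∀ x ∈ Icc 0 r, u i x = u₀ + ∫ y in (0:ℝ)..x, P i y * v i y)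
    (hv_eq : ∀ᶠ i in l, ∀ x ∈ Icc 0 r, v i x = v₀ + ∫ y in (0:ℝ)..x, Q i y * u i y)
    (hu'_eq : ∀ x ∈ Icc 0 r, u' x = u₀ + ∫ y in (0:ℝ)..x, P' y * v' y)
    (hv'_eq : ∀ x ∈ Icc 0 r, v' x = v₀ + ∫ y in (0:ℝ)..x, Q' y * u' y) :
    TendstoUniformlyOn u u' l (Icc 0 r) ∧ TendstoUniformlyOn v v' l (Icc 0 r) := by
  obtain ⟨Bu, hBu⟩ := isCompact_Icc.exists_bound_of_continuousOn hu'
  obtain ⟨Bv, hBv⟩ := isCompact_Icc.exists_bound_of_continuousOn hv'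
  have hbound : ∀ {R : ι → ℝ → ℝ} {w : ℝ → ℝ} {B : ℝ},
      (∀ᶠ i in l, ∀ y ∈ Icc 0 r, |R i y| ≤ C) → (∀ y ∈ Icc 0 r, ‖w y‖ ≤ B) →
      ∀ᶠ i in l, ∀ y ∈ Icc 0 r, |R i y * w y| ≤ C * B := fun hR hw =>
    hR.mono fun i hi y hy => by
      rw [abs_mul]
      exact mul_le_mul (hi y hy) (hw y hy) (abs_nonneg _) ((abs_nonneg _).trans (hi y hy))
  have hδ : Tendsto (fun i => ((∫ y in Ioc 0 r, |P i y * v' y - P' y * v' y|)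
      + ∫ y in Ioc 0 r, |Q i y * u' y - Q' y * u' y|) * exp (C * r)) l (𝓝 0) := by
    simpa using ((tendsto_setIntegral_abs_sub_of_dominated (hP.mono fun i hi => hi.mul hv')
      (hbound hPC hBv) (hP'.mul hv') fun y hy => (hPlim y hy).mul_const _).add
      (tendsto_setIntegral_abs_sub_of_dominated (hQ.mono fun i hi => hi.mul hu')
      (hbound hQC hBu) (hQ'.mul hu') fun y hy => (hQlim y hy).mul_const _)).mul_const
      (exp (C * r))
  have hest : ∀ᶠ i in l, ∀ x ∈ Icc 0 r, |u i x - u' x| + |v i x - v' x|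
      ≤ ((∫ y in Ioc 0 r, |P i y * v' y - P' y * v' y|)
          + ∫ y in Ioc 0 r, |Q i y * u' y - Q' y * u' y|) * exp (C * r) := by
    filter_upwards [hP, hQ, hPC, hQC, hu, hv, hu_eq, hv_eq] with i hPi hQi hPCi hQCi hui hvi
      hu_eqi hv_eqi x hx
    exact abs_sub_add_abs_sub_le_of_volterra hPi hQi hP' hQ' hui hvi hu' hv' hPCi hQCi hu_eqi
      hv_eqi hu'_eq hv'_eq hx
  exact ⟨tendstoUniformlyOn_of_abs_sub_le hδ (hest.mono fun i hi x hx => by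
      linarith [hi x hx, abs_nonneg (v i x - v' x)]),
    tendstoUniformlyOn_of_abs_sub_le hδ (hest.mono fun i hi x hx => by
      linarith [hi x hx, abs_nonneg (u i x - u' x)])⟩

end VolterraSystem

noncomputable def potential (b : ℝ → ℝ) (y : ℝ) : ℝ := ∫ t in (0:ℝ)..y, b t

/-- `½ f'' + b f' = ½ e^{-2A} (e^{2A} f')'` with `A = potential b`. -/
noncomputable def scaleDeriv (r : ℝ) (b f : ℝ → ℝ) (y : ℝ) : ℝ :=
  exp (2 * potential b y) * derivWithin f (Icc 0 r) y

def SolvesODE (r lam : ℝ) (b f : ℝ → ℝ) : Prop :=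
  ContDiffOn ℝ 2 f (Icc 0 r) ∧
  ∀ x ∈ Icc 0 r, (1/2) * derivWithin (derivWithin f (Icc 0 r)) (Icc 0 r) x
    + b x * derivWithin f (Icc 0 r) x = lam * f x

section ODE

variable {r lam : ℝ} {b f k l : ℝ → ℝ}

theorem SolPK.solvesODE (h : SolPK r lam b k) : SolvesODE r lam b k := ⟨h.1, h.2.1⟩

theorem SolPL.solvesODE (h : SolPL r lam b l) : SolvesODE r lam b l := ⟨h.1, h.2.1⟩

theorem hasDerivWithinAt_potential (hb : ContinuousOn b (Icc 0 r)) {x : ℝ} (hx : x ∈ Icc 0 r) :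
    HasDerivWithinAt (potential b) (b x) (Icc 0 r) x :=
  hasDerivWithinAt_primitive_Icc hb hx

theorem continuousOn_potential (hb : ContinuousOn b (Icc 0 r)) :
    ContinuousOn (potential b) (Icc 0 r) :=
  fun _ hx => (hasDerivWithinAt_potential hb hx).continuousWithinAt

theorem exp_neg_mul_scaleDeriv (y : ℝ) :
    exp (-(2 * potential b y)) * scaleDeriv r b f y = derivWithin f (Icc 0 r) y := by
  rw [scaleDeriv, ← mul_assoc, ← exp_add, neg_add_cancel, exp_zero, one_mul]

namespace SolvesODE

theorem continuousOn_derivWithin (h : SolvesODE r lam b f) (hr : 0 < r) :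
    ContinuousOn (derivWithin f (Icc 0 r)) (Icc 0 r) :=
  (h.1.derivWithin (m := 1) (uniqueDiffOn_Icc hr) (by norm_num)).continuousOn

theorem hasDerivWithinAt (h : SolvesODE r lam b f) {x : ℝ} (hx : x ∈ Icc 0 r) :
    HasDerivWithinAt f (derivWithin f (Icc 0 r) x) (Icc 0 r) x :=
  ((h.1.differentiableOn (by norm_num)) x hx).hasDerivWithinAt

theorem hasDerivWithinAt_derivWithin (h : SolvesODE r lam b f) (hr : 0 < r) {x : ℝ}
    (hx : x ∈ Icc 0 r) :
    HasDerivWithinAt (derivWithin f (Icc 0 r))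
      (derivWithin (derivWithin f (Icc 0 r)) (Icc 0 r) x) (Icc 0 r) x :=
  (((h.1.derivWithin (m := 1) (uniqueDiffOn_Icc hr) (by norm_num)).differentiableOn
    one_ne_zero) x hx).hasDerivWithinAt

theorem continuousOn_scaleDeriv (h : SolvesODE r lam b f) (hr : 0 < r)
    (hb : ContinuousOn b (Icc 0 r)) : ContinuousOn (scaleDeriv r b f) (Icc 0 r) :=
  (continuous_exp.comp_continuousOn (continuousOn_const.mul (continuousOn_potential hb))).mul
    (h.continuousOn_derivWithin hr)

theorem hasDerivWithinAt_scaleDeriv (h : SolvesODE r lam b f) (hr : 0 < r)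
    (hb : ContinuousOn b (Icc 0 r)) {x : ℝ} (hx : x ∈ Icc 0 r) :
    HasDerivWithinAt (scaleDeriv r b f) (2 * lam * exp (2 * potential b x) * f x) (Icc 0 r) x :=
  ((((hasDerivWithinAt_potential hb hx).const_mul 2).exp).mul
    (h.hasDerivWithinAt_derivWithin hr hx)).congr_deriv <| by
      linear_combination (2 * exp (2 * potential b x)) * h.2 x hx

theorem sub_eq_integral (h : SolvesODE r lam b f) (hr : 0 < r) {x y : ℝ} (hx : 0 ≤ x)
    (hxy : x ≤ y) (hy : y ≤ r) :
    f y - f x = ∫ t in x..y, exp (-(2 * potential b t)) * scaleDeriv r b f t := by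
  simp only [exp_neg_mul_scaleDeriv]
  exact (integral_eq_sub_of_hasDerivWithinAt_Icc (fun _ ht => h.hasDerivWithinAt ht)
    (h.continuousOn_derivWithin hr) hx hxy hy).symm

theorem scaleDeriv_sub_eq_integral (h : SolvesODE r lam b f) (hr : 0 < r)
    (hb : ContinuousOn b (Icc 0 r)) {x y : ℝ} (hx : 0 ≤ x) (hxy : x ≤ y) (hy : y ≤ r) :
    scaleDeriv r b f y - scaleDeriv r b f x
      = ∫ t in x..y, 2 * lam * exp (2 * potential b t) * f t :=
  (integral_eq_sub_of_hasDerivWithinAt_Icc (fun _ ht => h.hasDerivWithinAt_scaleDeriv hr hb ht)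
    ((continuousOn_const.mul (continuous_exp.comp_continuousOn
      (continuousOn_const.mul (continuousOn_potential hb)))).mul h.1.continuousOn)
    hx hxy hy).symm

end SolvesODE

/-- Abel's identity: `w e^{2A}` is constant. -/
theorem wfn_eq (hr : 0 < r) (hb : ContinuousOn b (Icc 0 r)) (hk : SolPK r lam b k)
    (hl : SolPL r lam b l) {y : ℝ} (hy : y ∈ Icc 0 r) :
    wfn r k l y = l 0 * exp (-(2 * potential b y)) := by
  have hderiv : ∀ z ∈ Icc 0 r,
      HasDerivWithinAt (fun y => wfn r k l y * exp (2 * potential b y)) 0 (Icc 0 r) z := by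
    intro z hz
    have hk' := hk.solvesODE
    have hl' := hl.solvesODE
    refine ((((hk'.hasDerivWithinAt_derivWithin hr hz).mul (hl'.hasDerivWithinAt hz)).sub
      ((hl'.hasDerivWithinAt_derivWithin hr hz).mul (hk'.hasDerivWithinAt hz))).mul
      ((hasDerivWithinAt_potential hb hz).const_mul 2).exp).congr_deriv ?_
    simp only [Pi.sub_apply, Pi.mul_apply]
    linear_combination (2 * exp (2 * potential b z) * l z) * hk'.2 z hz
      - (2 * exp (2 * potential b z) * k z) * hl'.2 z hz
  have hconst := integral_eq_sub_of_hasDerivWithinAt_Icc hderiv continuousOn_const le_rfl hy.1 hy.2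
  have hW0 : wfn r k l 0 * exp (2 * potential b 0) = l 0 := by
    simp [wfn, potential, hk.2.2.1, hk.2.2.2]
  rw [intervalIntegral.integral_zero, eq_comm, sub_eq_zero, hW0] at hconst
  rw [exp_neg, eq_mul_inv_iff_mul_eq₀ (exp_ne_zero _), hconst]

theorem SolPK.volterra_eq (hk : SolPK r lam b k) (hr : 0 < r) (hb : ContinuousOn b (Icc 0 r))
    {x : ℝ} (hx : x ∈ Icc 0 r) :
    k x = 0 + ∫ y in (0:ℝ)..x, exp (-(2 * potential b y)) * scaleDeriv r b k y ∧
      scaleDeriv r b k x = 1 + ∫ y in (0:ℝ)..x, 2 * lam * exp (2 * potential b y) * k y := by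
  rw [← hk.solvesODE.sub_eq_integral hr le_rfl hx.1 hx.2,
    ← hk.solvesODE.scaleDeriv_sub_eq_integral hr hb le_rfl hx.1 hx.2]
  simp [scaleDeriv, potential, hk.2.2.1, hk.2.2.2]

theorem SolPL.volterra_eq_reflect (hl : SolPL r lam b l) (hr : 0 < r)
    (hb : ContinuousOn b (Icc 0 r)) {t : ℝ} (ht : t ∈ Icc 0 r) :
    l (r - t) = 1 + ∫ y in (0:ℝ)..t,
        exp (-(2 * potential b (r - y))) * -scaleDeriv r b l (r - y) ∧
      -scaleDeriv r b l (r - t)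
        = 0 + ∫ y in (0:ℝ)..t, 2 * lam * exp (2 * potential b (r - y)) * l (r - y) := by
  have h1 := intervalIntegral.integral_comp_sub_left (a := 0) (b := t)
    (fun y => exp (-(2 * potential b y)) * scaleDeriv r b l y) r
  have h2 := intervalIntegral.integral_comp_sub_left (a := 0) (b := t)
    (fun y => 2 * lam * exp (2 * potential b y) * l y) r
  simp only [mul_neg, intervalIntegral.integral_neg, h1, h2, sub_zero,
    ← hl.solvesODE.sub_eq_integral hr (sub_nonneg.2 ht.2) (by linarith [ht.1]) le_rfl,
    ← hl.solvesODE.scaleDeriv_sub_eq_integral hr hb (sub_nonneg.2 ht.2) (by linarith [ht.1]) le_rfl]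
  simp [scaleDeriv, hl.2.2.1, hl.2.2.2]

end ODE

theorem integral_cosh_mul {s : ℝ} (hs : s ≠ 0) (x : ℝ) :
    ∫ y in (0:ℝ)..x, cosh (s * y) = sinh (s * x) / s := by
  rw [intervalIntegral.integral_eq_sub_of_hasDerivAt (f := fun y => sinh (s * y) / s)
    (fun t _ => ((((hasDerivAt_id' t).const_mul s).sinh).div_const s).congr_deriv (by field_simp))
    (by apply Continuous.intervalIntegrable; fun_prop)]
  simp

theorem integral_sinh_mul {s : ℝ} (hs : s ≠ 0) (x : ℝ) :
    ∫ y in (0:ℝ)..x, sinh (s * y) = (cosh (s * x) - 1) / s := by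
  rw [intervalIntegral.integral_eq_sub_of_hasDerivAt (f := fun y => cosh (s * y) / s)
    (fun t _ => ((((hasDerivAt_id' t).const_mul s).cosh).div_const s).congr_deriv (by field_simp))
    (by apply Continuous.intervalIntegrable; fun_prop)]
  simp [sub_div]

section Resolvent

variable {r lam : ℝ} {b k l h : ℝ → ℝ}

theorem integral_div_wfn_eq (hr : 0 < r) (hb : ContinuousOn b (Icc 0 r)) (hk : SolPK r lam b k)
    (hl : SolPL r lam b l) (f : ℝ → ℝ) {p q : ℝ} (hp : 0 ≤ p) (hpq : p ≤ q) (hq : q ≤ r) :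
    ∫ y in p..q, f y * h y / wfn r k l y
      = (∫ y in p..q, f y * h y * exp (2 * potential b y)) * (l 0)⁻¹ := by
  rw [← intervalIntegral.integral_mul_const]
  refine intervalIntegral.integral_congr fun y hy => ?_
  rw [uIcc_of_le hpq] at hy
  simp only [wfn_eq hr hb hk hl ⟨hp.trans hy.1, hy.2.trans hq⟩, exp_neg, div_eq_mul_inv, mul_inv,
    inv_inv]
  ring

theorem R0_eq_exp_potential (hr : 0 < r) (hb : ContinuousOn b (Icc 0 r)) (hk : SolPK r lam b k)
    (hl : SolPL r lam b l) {x : ℝ} (hx : x ∈ Icc 0 r) :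
    R0 r k l h x = 2 * k x * ((∫ y in x..r, l y * h y * exp (2 * potential b y)) * (l 0)⁻¹)
      + 2 * l x * ((∫ y in (0:ℝ)..x, k y * h y * exp (2 * potential b y)) * (l 0)⁻¹) := by
  rw [R0, integral_div_wfn_eq hr hb hk hl l hx.1 hx.2 le_rfl,
    integral_div_wfn_eq hr hb hk hl k le_rfl hx.1 hx.2]

theorem Cfn_eq_exp_potential (hr : 0 < r) (hb : ContinuousOn b (Icc 0 r)) (hk : SolPK r lam b k)
    (hl : SolPL r lam b l) :
    Cfn r k l h = 2 * ((∫ y in (0:ℝ)..r, l y * h y * exp (2 * potential b y)) * (l 0)⁻¹) := by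
  rw [Cfn, integral_div_wfn_eq hr hb hk hl l le_rfl hr.le le_rfl]

/-- `R0lim` as `R0` for the limit solutions `k = e^{-2α} sinh(sx)/s`, `ℓ = cosh(s(r - x))`
(`s = √(2λ)`), whose Wronskian is `ℓ(0) e^{-2α}`. -/
theorem R0lim_eq (α : ℝ) (x : ℝ) :
    R0lim r lam h x
      = 2 * (exp (-(2 * α)) * (sinh (sqrt (2 * lam) * x) / sqrt (2 * lam))) *
          ((∫ y in x..r, cosh (sqrt (2 * lam) * (r - y)) * h y * exp (2 * α)) *
            (cosh (sqrt (2 * lam) * r))⁻¹)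
        + 2 * cosh (sqrt (2 * lam) * (r - x)) *
          ((∫ y in (0:ℝ)..x, exp (-(2 * α)) * (sinh (sqrt (2 * lam) * y) / sqrt (2 * lam)) * h y
            * exp (2 * α)) * (cosh (sqrt (2 * lam) * r))⁻¹) := by
  have hα : exp (-(2 * α)) * exp (2 * α) = 1 := by rw [← exp_add]; simp
  have e : ∫ y in (0:ℝ)..x, exp (-(2 * α)) * (sinh (sqrt (2 * lam) * y) / sqrt (2 * lam)) * h y
      * exp (2 * α) = ∫ y in (0:ℝ)..x, sinh (sqrt (2 * lam) * y) / sqrt (2 * lam) * h y :=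
    intervalIntegral.integral_congr fun y _ => by
      linear_combination sinh (sqrt (2 * lam) * y) / sqrt (2 * lam) * h y * hα
  rw [e, R0lim, intervalIntegral.integral_div, intervalIntegral.integral_div,
    intervalIntegral.integral_mul_const]
  linear_combination -2 * (sinh (sqrt (2 * lam) * x) / sqrt (2 * lam)) *
    (∫ y in x..r, cosh (sqrt (2 * lam) * (r - y)) * h y) / cosh (sqrt (2 * lam) * r) * hα

theorem mul_Clim_eq (α : ℝ) :
    exp (2 * α) * Clim r lam h
      = 2 * ((∫ y in (0:ℝ)..r, cosh (sqrt (2 * lam) * (r - y)) * h y * exp (2 * α)) *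
          (cosh (sqrt (2 * lam) * r))⁻¹) := by
  rw [Clim, intervalIntegral.integral_mul_const]
  ring

theorem continuousOn_R0lim (hr : 0 < r) (hh : ContinuousOn h (Icc 0 r)) :
    ContinuousOn (R0lim r lam h) (Icc 0 r) :=
  ((continuousOn_const.mul (by fun_prop)).mul (continuousOn_primitives_Icc hr.le
    (((Continuous.continuousOn (by fun_prop)).mul hh).div_const _)).2).add
  ((continuousOn_const.mul (by fun_prop)).mul (continuousOn_primitives_Icc hr.le
    (((Continuous.continuousOn (by fun_prop)).mul hh).div_const _)).1)

theorem Clim_one_pos (hr : 0 < r) : 0 < Clim r lam (fun _ => 1) := by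
  refine mul_pos (div_pos two_pos (cosh_pos _))
    (intervalIntegral.intervalIntegral_pos_of_pos_on ?_ (fun y _ => by simpa using cosh_pos _) hr)
  exact Continuous.intervalIntegrable (by fun_prop) _ _

end Resolvent

/-- `b i → α δ₀`, expressed through the potentials. -/
structure ConcentratingDrift {ι : Type*} (l : Filter ι) (r α : ℝ) (b : ι → ℝ → ℝ) : Prop where
  continuousOn : ∀ᶠ i in l, ContinuousOn (b i) (Icc 0 r)
  bounded_potential : ∃ M, ∀ᶠ i in l, ∀ y ∈ Icc 0 r, |potential (b i) y| ≤ M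
  tendsto_potential : ∀ y ∈ Ioo 0 r, Tendsto (fun i => potential (b i) y) l (𝓝 α)

namespace ConcentratingDrift

variable {ι : Type*} {l : Filter ι} {r α lam : ℝ} {b K L : ι → ℝ → ℝ} {h : ℝ → ℝ}

theorem of_integral_abs_le (hb : ∀ᶠ i in l, ContinuousOn (b i) (Icc 0 r))
    (hM : ∃ M, ∀ᶠ i in l, ∫ u in (0:ℝ)..r, |b i u| ≤ M)
    (hlim : ∀ y ∈ Ioo 0 r, Tendsto (fun i => ∫ u in (0:ℝ)..y, b i u) l (𝓝 α)) :
    ConcentratingDrift l r α b := by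
  obtain ⟨M, hM⟩ := hM
  refine ⟨hb, ⟨M, (hb.and hM).mono fun i hi y hy => ?_⟩, hlim⟩
  calc |potential (b i) y| ≤ ∫ u in (0:ℝ)..y, |b i u| :=
        intervalIntegral.abs_integral_le_integral_abs hy.1
    _ ≤ ∫ u in (0:ℝ)..r, |b i u| :=
        intervalIntegral.integral_mono_interval le_rfl hy.1 hy.2
          (Eventually.of_forall fun _ => abs_nonneg _)
          (hi.1.abs.intervalIntegrable_of_Icc (hy.1.trans hy.2))
    _ ≤ M := hi.2

theorem comp_potential (H : ConcentratingDrift l r α b) {G φ : ℝ → ℝ} (hG : Continuous G)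
    (hφ : ContinuousOn φ (Icc 0 r)) (hφI : MapsTo φ (Icc 0 r) (Icc 0 r))
    (hφO : MapsTo φ (Ioo 0 r) (Ioo 0 r)) :
    (∀ᶠ i in l, ContinuousOn (fun y => G (potential (b i) (φ y))) (Icc 0 r)) ∧
    (∃ C, ∀ᶠ i in l, ∀ y ∈ Icc 0 r, |G (potential (b i) (φ y))| ≤ C) ∧
    ∀ y ∈ Ioo 0 r, Tendsto (fun i => G (potential (b i) (φ y))) l (𝓝 (G α)) := by
  obtain ⟨M, hM⟩ := H.bounded_potential
  obtain ⟨C, hC⟩ := (isCompact_Icc (a := -M) (b := M)).exists_bound_of_continuousOn hG.continuousOn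
  refine ⟨H.continuousOn.mono fun i hi => hG.comp_continuousOn
      ((continuousOn_potential hi).comp hφ hφI), ⟨C, hM.mono fun i hi y hy => ?_⟩,
    fun y hy => (hG.tendsto α).comp (H.tendsto_potential _ (hφO hy))⟩
  exact hC _ (abs_le.1 (hi _ (hφI hy)))

theorem tendstoUniformlyOn_of_solPK [l.IsCountablyGenerated] (H : ConcentratingDrift l r α b)
    (hr : 0 < r) (hlam : 0 < lam) (hK : ∀ᶠ i in l, SolPK r lam (b i) (K i)) :
    TendstoUniformlyOn K (fun x => exp (-(2 * α)) * (sinh (sqrt (2 * lam) * x) / sqrt (2 * lam)))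
      l (Icc 0 r) := by
  set s := sqrt (2 * lam)
  have hs : s ≠ 0 := (sqrt_pos.2 (by linarith)).ne'
  have hs2 : s * s = 2 * lam := mul_self_sqrt (by linarith)
  obtain ⟨hPc, ⟨CP, hCP⟩, hPlim⟩ := H.comp_potential (G := fun a => exp (-(2 * a)))
    (φ := fun y => y) (by fun_prop) continuousOn_id (mapsTo_id _) (mapsTo_id _)
  obtain ⟨hQc, ⟨CQ, hCQ⟩, hQlim⟩ := H.comp_potential (G := fun a => 2 * lam * exp (2 * a))
    (φ := fun y => y) (by fun_prop) continuousOn_id (mapsTo_id _) (mapsTo_id _)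
  refine (tendstoUniformlyOn_of_volterra_system (C := max CP CQ) (u₀ := 0) (v₀ := 1)
    (v := fun i => scaleDeriv r (b i) (K i)) (v' := fun x => cosh (s * x)) hPc hQc
    (hCP.mono fun i hi y hy => (hi y hy).trans (le_max_left _ _))
    (hCQ.mono fun i hi y hy => (hi y hy).trans (le_max_right _ _))
    continuousOn_const continuousOn_const hPlim hQlim
    (hK.mono fun i hi => hi.1.continuousOn)
    ((hK.and H.continuousOn).mono fun i hi => hi.1.solvesODE.continuousOn_scaleDeriv hr hi.2)
    (by fun_prop) (by fun_prop) ?_ ?_ ?_ ?_).1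
  · filter_upwards [hK, H.continuousOn] with i hi hb x hx using (hi.volterra_eq hr hb hx).1
  · filter_upwards [hK, H.continuousOn] with i hi hb x hx using (hi.volterra_eq hr hb hx).2
  · intro x _
    rw [intervalIntegral.integral_const_mul, integral_cosh_mul hs, zero_add]
  · intro x _
    have hα : exp (2 * α) * exp (-(2 * α)) = 1 := by rw [← exp_add]; simp
    have hint : ∀ y, 2 * lam * exp (2 * α) * (exp (-(2 * α)) * (sinh (s * y) / s))
        = 2 * lam / s * sinh (s * y) := fun y => by
      linear_combination 2 * lam * (sinh (s * y) / s) * hα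
    simp only [hint, intervalIntegral.integral_const_mul, integral_sinh_mul hs]
    rw [← hs2]
    field_simp
    ring

theorem tendstoUniformlyOn_of_solPL [l.IsCountablyGenerated] (H : ConcentratingDrift l r α b)
    (hr : 0 < r) (hlam : 0 < lam) (hL : ∀ᶠ i in l, SolPL r lam (b i) (L i)) :
    TendstoUniformlyOn L (fun x => cosh (sqrt (2 * lam) * (r - x))) l (Icc 0 r) := by
  set s := sqrt (2 * lam)
  have hs : s ≠ 0 := (sqrt_pos.2 (by linarith)).ne'
  have hs2 : s * s = 2 * lam := mul_self_sqrt (by linarith)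
  have hα : exp (-(2 * α)) * exp (2 * α) = 1 := by rw [← exp_add]; simp
  have hI : MapsTo (fun y => r - y) (Icc 0 r) (Icc 0 r) := fun y hy =>
    ⟨by linarith [hy.2], by linarith [hy.1]⟩
  have hO : MapsTo (fun y => r - y) (Ioo 0 r) (Ioo 0 r) := fun y hy =>
    ⟨by linarith [hy.2], by linarith [hy.1]⟩
  have hφ : ContinuousOn (fun y => r - y) (Icc 0 r) := by fun_prop
  obtain ⟨hPc, ⟨CP, hCP⟩, hPlim⟩ := H.comp_potential (G := fun a => exp (-(2 * a)))
    (by fun_prop) hφ hI hO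
  obtain ⟨hQc, ⟨CQ, hCQ⟩, hQlim⟩ := H.comp_potential (G := fun a => 2 * lam * exp (2 * a))
    (by fun_prop) hφ hI hO
  have h := (tendstoUniformlyOn_of_volterra_system (C := max CP CQ) (u₀ := 1) (v₀ := 0)
    (u := fun i t => L i (r - t)) (v := fun i t => -scaleDeriv r (b i) (L i) (r - t))
    (u' := fun t => cosh (s * t)) (v' := fun t => exp (2 * α) * (s * sinh (s * t))) hPc hQc
    (hCP.mono fun i hi y hy => (hi y hy).trans (le_max_left _ _))
    (hCQ.mono fun i hi y hy => (hi y hy).trans (le_max_right _ _))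
    continuousOn_const continuousOn_const hPlim hQlim
    (hL.mono fun i hi => hi.1.continuousOn.comp hφ hI)
    ((hL.and H.continuousOn).mono fun i hi =>
      (hi.1.solvesODE.continuousOn_scaleDeriv hr hi.2).comp hφ hI |>.neg)
    (by fun_prop) (by fun_prop) ?_ ?_ ?_ ?_).1
  · simpa [Function.comp_def] using (h.comp (fun x => r - x)).mono hI
  · filter_upwards [hL, H.continuousOn] with i hi hb t ht
      using (hi.volterra_eq_reflect hr hb ht).1
  · filter_upwards [hL, H.continuousOn] with i hi hb t ht
      using (hi.volterra_eq_reflect hr hb ht).2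
  · intro t _
    have hint : ∀ y, exp (-(2 * α)) * (exp (2 * α) * (s * sinh (s * y))) = s * sinh (s * y) :=
      fun y => by linear_combination s * sinh (s * y) * hα
    simp only [hint, intervalIntegral.integral_const_mul, integral_sinh_mul hs]
    field_simp
    ring
  · intro t _
    rw [intervalIntegral.integral_const_mul, integral_cosh_mul hs, ← hs2]
    field_simp
    ring

theorem tendstoUniformlyOn_primitives_mul_exp [l.IsCountablyGenerated]
    (H : ConcentratingDrift l r α b) {F : ι → ℝ → ℝ} {f : ℝ → ℝ}
    (hF : TendstoUniformlyOn F f l (Icc 0 r)) (hFc : ∀ᶠ i in l, ContinuousOn (F i) (Icc 0 r))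
    (hf : ContinuousOn f (Icc 0 r)) (hh : ContinuousOn h (Icc 0 r)) :
    TendstoUniformlyOn (fun i x => ∫ y in (0:ℝ)..x, F i y * h y * exp (2 * potential (b i) y))
      (fun x => ∫ y in (0:ℝ)..x, f y * h y * exp (2 * α)) l (Icc 0 r) ∧
    TendstoUniformlyOn (fun i x => ∫ y in x..r, F i y * h y * exp (2 * potential (b i) y))
      (fun x => ∫ y in x..r, f y * h y * exp (2 * α)) l (Icc 0 r) := by
  obtain ⟨hEc, ⟨CE, hCE⟩, hElim⟩ := H.comp_potential (G := fun a => exp (2 * a))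
    (φ := fun y => y) (by fun_prop) continuousOn_id (mapsTo_id _) (mapsTo_id _)
  obtain ⟨Bf, hBf⟩ := isCompact_Icc.exists_bound_of_continuousOn hf
  obtain ⟨Bh, hBh⟩ := isCompact_Icc.exists_bound_of_continuousOn hh
  have hc : ContinuousOn (fun y => f y * h y * exp (2 * α)) (Icc 0 r) :=
    (hf.mul hh).mul continuousOn_const
  have hcont := (hFc.and hEc).mono fun i hi => (hi.1.mul hh).mul hi.2
  refine tendstoUniformlyOn_primitives_of_tendsto_setIntegral_abs_sub hcont hc
    (tendsto_setIntegral_abs_sub_of_dominated (B := (Bf + 1) * Bh * CE) hcont ?_ hc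
      fun y hy => ((hF.tendsto_at (Ioo_subset_Icc_self hy)).mul_const (h y)).mul (hElim y hy))
  filter_upwards [hF.eventually_abs_le hBf, hCE] with i hFi hEi y hy
  have hFi := hFi y hy
  have hhy : |h y| ≤ Bh := hBh y hy
  rw [abs_mul, abs_mul]
  exact mul_le_mul (mul_le_mul hFi hhy (abs_nonneg _) ((abs_nonneg _).trans hFi)) (hEi y hy)
    (abs_nonneg _) (mul_nonneg ((abs_nonneg _).trans hFi) ((abs_nonneg _).trans hhy))

theorem tendstoUniformlyOn_R0_and_tendsto_Cfn [l.IsCountablyGenerated]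
    (H : ConcentratingDrift l r α b) (hr : 0 < r) (hlam : 0 < lam) (hK : ∀ᶠ i in l, SolPK r lam (b i) (K i))
    (hL : ∀ᶠ i in l, SolPL r lam (b i) (L i)) (hh : ContinuousOn h (Icc 0 r)) :
    TendstoUniformlyOn (fun i => R0 r (K i) (L i) h) (R0lim r lam h) l (Icc 0 r) ∧
      Tendsto (fun i => Cfn r (K i) (L i) h) l (𝓝 (exp (2 * α) * Clim r lam h)) := by
  have hKu := H.tendstoUniformlyOn_of_solPK hr hlam hK
  have hLu := H.tendstoUniformlyOn_of_solPL hr hlam hL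
  have hkc : ContinuousOn (fun x => exp (-(2 * α)) * (sinh (sqrt (2 * lam) * x) / sqrt (2 * lam)))
      (Icc 0 r) := by fun_prop
  have hlc : ContinuousOn (fun x => cosh (sqrt (2 * lam) * (r - x))) (Icc 0 r) := by fun_prop
  obtain ⟨hIK, -⟩ := H.tendstoUniformlyOn_primitives_mul_exp hKu
    (hK.mono fun i hi => hi.1.continuousOn) hkc hh
  obtain ⟨-, hIL⟩ := H.tendstoUniformlyOn_primitives_mul_exp hLu
    (hL.mono fun i hi => hi.1.continuousOn) hlc hh
  obtain ⟨cIK, -⟩ := continuousOn_primitives_Icc hr.le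
    ((hkc.fun_mul hh).fun_mul (continuousOn_const (c := exp (2 * α))))
  obtain ⟨-, cIL⟩ := continuousOn_primitives_Icc hr.le
    ((hlc.fun_mul hh).fun_mul (continuousOn_const (c := exp (2 * α))))
  have hL0 : Tendsto (fun i => (L i 0)⁻¹) l (𝓝 (cosh (sqrt (2 * lam) * r))⁻¹) := by
    have := (hLu.tendsto_at (left_mem_Icc.2 hr.le)).inv₀ (cosh_pos _).ne'
    rwa [sub_zero] at this
  have hinv := hL0.tendstoUniformlyOn_const (Icc 0 r)
  have htwo := (tendsto_const_nhds (x := (2:ℝ)) (f := l)).tendstoUniformlyOn_const (Icc 0 r)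
  have T1 := (htwo.mul_of_isCompact isCompact_Icc hKu continuousOn_const hkc).mul_of_isCompact
    isCompact_Icc (hIL.mul_of_isCompact isCompact_Icc hinv cIL continuousOn_const)
    (continuousOn_const.mul hkc) (cIL.mul continuousOn_const)
  have T2 := (htwo.mul_of_isCompact isCompact_Icc hLu continuousOn_const hlc).mul_of_isCompact
    isCompact_Icc (hIK.mul_of_isCompact isCompact_Icc hinv cIK continuousOn_const)
    (continuousOn_const.mul hlc) (cIK.mul continuousOn_const)
  refine ⟨((T1.fun_add T2).congr ?_).congr_right ?_, ?_⟩
  · filter_upwards [hK, hL, H.continuousOn] with i hKi hLi hb x hx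
    exact (R0_eq_exp_potential hr hb hKi hLi hx).symm
  · exact fun x _ => (R0lim_eq α x).symm
  · rw [mul_Clim_eq]
    refine (((hIL.tendsto_at (left_mem_Icc.2 hr.le)).mul hL0).const_mul 2).congr' ?_
    filter_upwards [hK, hL, H.continuousOn] with i hKi hLi hb
    exact (Cfn_eq_exp_potential hr hb hKi hLi).symm

end ConcentratingDrift

theorem tendstoUniformlyOn_Rfull {κ : ℕ} {ι : Type*} {l : Filter ι} {r lam : ℝ} (hr : 0 < r)
    (hlam : 0 < lam) {p c : Fin κ → ℝ} (hp : ∀ j, 0 < p j) (hc : ∀ j, 0 < c j)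
    {K L : ι → Fin κ → ℝ → ℝ} {g : Fin κ → ℝ → ℝ} (hg : ∀ j, ContinuousOn (g j) (Icc 0 r))
    (hR0C : ∀ j (h : ℝ → ℝ), ContinuousOn h (Icc 0 r) →
      TendstoUniformlyOn (fun i => R0 r (K i j) (L i j) h) (R0lim r lam h) l (Icc 0 r) ∧
        Tendsto (fun i => Cfn r (K i j) (L i j) h) l (𝓝 (c j * Clim r lam h)))
    (i : Fin κ) :
    TendstoUniformlyOn (fun ε x => Rfull κ r lam p (K ε) (L ε) g i x)
      (fun x => Rlimf κ r lam (fun j => p j * c j / ∑ j', p j' * c j') g i x) l (Icc 0 r) := by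
  have hS : ∑ j, p j * c j ≠ 0 :=
    (Finset.sum_pos (fun j _ => mul_pos (hp j) (hc j)) ⟨i, Finset.mem_univ _⟩).ne'
  have hD : lam * ∑ j, p j * (c j * Clim r lam (fun _ => 1)) ≠ 0 :=
    (mul_pos hlam (Finset.sum_pos (fun j _ => mul_pos (hp j) (mul_pos (hc j) (Clim_one_pos hr)))
      ⟨i, Finset.mem_univ _⟩)).ne'
  have hρ := ((tendsto_finsetSum Finset.univ fun j _ =>
    ((hR0C j _ (hg j)).2.const_mul (p j))).div ((tendsto_finsetSum Finset.univ fun j _ =>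
      ((hR0C j _ continuousOn_const).2.const_mul (p j))).const_mul lam) hD)
  have hLfn : TendstoUniformlyOn (fun ε => Lfn r lam (K ε i) (L ε i)) (Llim r lam) l (Icc 0 r) :=
    (tendsto_const_nhds.tendstoUniformlyOn_const _).fun_sub
      ((tendsto_const_nhds.tendstoUniformlyOn_const _).mul_of_isCompact isCompact_Icc
        (hR0C i _ continuousOn_const).1 continuousOn_const
        (continuousOn_R0lim hr continuousOn_const))
  refine ((hR0C i _ (hg i)).1.fun_add ((hρ.tendstoUniformlyOn_const _).mul_of_isCompact
    isCompact_Icc hLfn continuousOn_const (continuousOn_const.sub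
      (continuousOn_const.mul (continuousOn_R0lim hr continuousOn_const))))).congr_right
      fun x _ => ?_
  simp only [Rlimf, ← mul_assoc, div_mul_eq_mul_div, ← Finset.sum_div, mul_div_assoc',
    div_div_div_cancel_right₀ hS]

theorem stmt11_general (κ : ℕ) (r lam : ℝ) (hr : 0 < r) (hlam : 0 < lam)
    (α : Fin κ → ℝ) (p : Fin κ → ℝ) (hp : ∀ i, 0 < p i)
    (a : ℝ → Fin κ → ℝ → ℝ)
    (hacont : ∀ ε > (0:ℝ), ∀ i, ContinuousOn (a ε i) (Icc 0 r))
    (haM : ∀ i, ∃ M : ℝ, ∀ ε > (0:ℝ), ∫ u in (0:ℝ)..r, |a ε i u| ≤ M)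
    (hlim : ∀ i, ∀ y z : ℝ, 0 ≤ y → y < z → z ≤ r →
      Tendsto (fun ε => ∫ u in y..z, a ε i u) (𝓝[>] (0:ℝ))
        (𝓝 (α i * (if y = 0 then 1 else 0))))
    (K L : ℝ → Fin κ → ℝ → ℝ)
    (hK : ∀ ε > (0:ℝ), ∀ i, SolPK r lam (a ε i) (K ε i))
    (hL : ∀ ε > (0:ℝ), ∀ i, SolPL r lam (a ε i) (L ε i))
    (g : Fin κ → ℝ → ℝ)
    (hg : ∀ i, ContinuousOn (g i) (Icc 0 r)) :
    ∀ i, TendstoUniformlyOn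
      (fun ε x => Rfull κ r lam p (K ε) (L ε) g i x)
      (fun x => Rlimf κ r lam
        (fun j => p j * Real.exp (2 * α j) / ∑ j', p j' * Real.exp (2 * α j')) g i x)
      (𝓝[>] (0:ℝ)) (Icc 0 r) := by
  have hdrift : ∀ j, ConcentratingDrift (𝓝[>] (0:ℝ)) r (α j) (fun ε => a ε j) := fun j =>
    .of_integral_abs_le (eventually_nhdsWithin_of_forall fun ε hε => hacont ε hε j)
      (let ⟨M, hM⟩ := haM j; ⟨M, eventually_nhdsWithin_of_forall hM⟩)
      (fun y hy => by simpa using hlim j 0 y le_rfl hy.1 hy.2.le)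
  exact tendstoUniformlyOn_Rfull hr hlam hp (fun j => exp_pos _) hg fun j h hh =>
    (hdrift j).tendstoUniformlyOn_R0_and_tendsto_Cfn hr hlam
      (eventually_nhdsWithin_of_forall fun ε hε => hK ε hε j)
      (eventually_nhdsWithin_of_forall fun ε hε => hL ε hε j) hh

/-- Portenko-type approximation of the Walsh process on a finite star graph
with `κ` edges: the resolvents of the approximating processes converge, coordinatewise
uniformly on `[0,r]`, to the resolvent of the Walsh process with transformed weights
`p̃ᵢ = pᵢe^{2αᵢ}/Σⱼpⱼe^{2αⱼ}`. -/
theorem stmt11 (κ : ℕ) (hκ : 2 ≤ κ) (r lam : ℝ) (hr : 0 < r) (hlam : 0 < lam)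
    (α : Fin κ → ℝ) (p : Fin κ → ℝ) (hp : ∀ i, 0 < p i) (hp1 : ∑ i, p i = 1)
    (a : ℝ → Fin κ → ℝ → ℝ)
    (hacont : ∀ ε > (0:ℝ), ∀ i, ContinuousOn (a ε i) (Icc 0 r))
    (haM : ∀ i, ∃ M : ℝ, ∀ ε > (0:ℝ), ∫ u in (0:ℝ)..r, |a ε i u| ≤ M)
    (hlim : ∀ i, ∀ y z : ℝ, 0 ≤ y → y < z → z ≤ r →
      Tendsto (fun ε => ∫ u in y..z, a ε i u) (𝓝[>] (0:ℝ))
        (𝓝 (α i * (if y = 0 then 1 else 0))))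
    (K L : ℝ → Fin κ → ℝ → ℝ)
    (hK : ∀ ε > (0:ℝ), ∀ i, SolPK r lam (a ε i) (K ε i))
    (hL : ∀ ε > (0:ℝ), ∀ i, SolPL r lam (a ε i) (L ε i))
    (g : Fin κ → ℝ → ℝ)
    (hg : ∀ i, ContinuousOn (g i) (Icc 0 r))
    (hg0 : ∀ i j, g i 0 = g j 0) :
    ∀ i, TendstoUniformlyOn
      (fun ε x => Rfull κ r lam p (K ε) (L ε) g i x)
      (fun x => Rlimf κ r lam
        (fun j => p j * Real.exp (2 * α j) / ∑ j', p j' * Real.exp (2 * α j')) g i x)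
      (𝓝[>] (0:ℝ)) (Icc 0 r) :=
  stmt11_general κ r lam hr hlam α p hp a hacont haM hlim K L hK hL g hg
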